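/- Let n ≥ 3 and let λ₁ ≥ λ₂ ≥ ... ≥ λₙ be real numbers with ∑_{i=1}^n arctan(λᵢ) ≥ (n-2)π/2. Then λ₁ + (n-1)λₙ ≥ 0. -/

import Mathlib

/-!
Since every `arctan λᵢ` is at most `arctan λ₁`, the hypothesis gives
`arctan λₙ ≥ (n - 2) π / 2 - (n - 1) arctan λ₁`. For `m ≥ 1` the function
`x ↦ m arctan x - arctan (x / m)` stays below `(m - 1) π / 2`: for `x > 0`, via
`arctan x = π / 2 - arctan x⁻¹`, this is `arctan (m t) ≤ m arctan t` at `t = x⁻¹`, which holds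
because `m arctan t - arctan (m t)` has derivative `m / (1 + t²) - m / (1 + m² t²) ≥ 0`.
With `m = n - 1` this yields `arctan λₙ ≥ -arctan (λ₁ / m)`, i.e. `m λₙ ≥ -λ₁`.
-/

open Real Finset

theorem monotone_mul_arctan_sub_arctan_mul {m : ℝ} (hm : 1 ≤ m) :
    Monotone fun t => m * arctan t - arctan (m * t) := by
  refine monotone_of_hasDerivAt_nonneg
    (f' := fun t => m * (1 / (1 + t ^ 2)) - 1 / (1 + (m * t) ^ 2) * m)
    (fun t => (((hasDerivAt_arctan t).const_mul m).sub
      (((hasDerivAt_id t).const_mul m).arctan.congr_deriv (by simp)))) fun t => ?_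
  have hsq : t ^ 2 ≤ (m * t) ^ 2 :=
    mul_pow m t 2 ▸ le_mul_of_one_le_left (sq_nonneg t) (one_le_pow₀ hm)
  have hm0 : 0 ≤ m := by linarith
  simp only [Pi.zero_apply, sub_nonneg, one_div]
  rw [mul_comm]
  gcongr

theorem arctan_mul_le_mul_arctan {m t : ℝ} (hm : 1 ≤ m) (ht : 0 ≤ t) :
    arctan (m * t) ≤ m * arctan t := by
  simpa using monotone_mul_arctan_sub_arctan_mul hm ht

theorem mul_arctan_sub_arctan_div_le {m : ℝ} (hm : 1 ≤ m) (x : ℝ) :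
    m * arctan x - arctan (x / m) ≤ (m - 1) * (π / 2) := by
  rcases le_or_gt x 0 with hx | hx
  · have h1 : arctan x ≤ arctan (x / m) :=
      arctan_le_arctan_iff.mpr (by rw [le_div_iff₀ (by linarith)]; nlinarith)
    have h2 : arctan x ≤ 0 := by simpa using arctan_le_arctan_iff.mpr hx
    nlinarith [pi_pos]
  · have hxm : 0 < x / m := by positivity
    have key := arctan_mul_le_mul_arctan hm (inv_nonneg.mpr hx.le)
    rw [arctan_inv_of_pos hx, ← div_eq_mul_inv, ← inv_div, arctan_inv_of_pos hxm] at key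
    linarith

theorem sum_le_add_card_sub_one_mul {ι : Type*} [Fintype ι] [DecidableEq ι] (f : ι → ℝ) (j : ι)
    {M : ℝ} (hM : ∀ i, f i ≤ M) : ∑ i, f i ≤ f j + (Fintype.card ι - 1) * M := by
  rw [← add_sum_erase _ _ (mem_univ j)]
  gcongr
  calc ∑ i ∈ univ.erase j, f i ≤ #(univ.erase j) • M := sum_le_card_nsmul _ _ _ fun i _ => hM i
    _ = (Fintype.card ι - 1) * M := by
      rw [card_erase_of_mem (mem_univ j), card_univ, nsmul_eq_mul,
        Nat.cast_sub (Fintype.card_pos_iff.mpr ⟨j⟩), Nat.cast_one]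

theorem largest_plus_smallest (n : ℕ) (hn : 3 ≤ n) (lam : Fin n → ℝ)
    (hsort : ∀ i j : Fin n, i ≤ j → lam j ≤ lam i)
    (hsum : ∑ i, Real.arctan (lam i) ≥ ((n : ℝ) - 2) * Real.pi / 2) :
    lam ⟨0, by omega⟩ + ((n : ℝ) - 1) * lam ⟨n - 1, by omega⟩ ≥ 0 := by
  set m : ℝ := (n : ℝ) - 1
  have hm : 1 ≤ m := by
    have : (3 : ℝ) ≤ n := by exact_mod_cast hn
    linarith
  have hsplit := sum_le_add_card_sub_one_mul (fun i => arctan (lam i)) ⟨n - 1, by omega⟩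
    (M := arctan (lam ⟨0, by omega⟩))
    fun i => arctan_le_arctan_iff.mpr (hsort _ i (Nat.zero_le i.val))
  rw [Fintype.card_fin] at hsplit
  have hkey := mul_arctan_sub_arctan_div_le hm (lam ⟨0, by omega⟩)
  have hlow : arctan (-(lam ⟨0, by omega⟩ / m)) ≤ arctan (lam ⟨n - 1, by omega⟩) := by
    rw [arctan_neg]
    linarith
  have hsmallest := arctan_le_arctan_iff.mp hlow
  rw [neg_le, le_div_iff₀ (by linarith)] at hsmallest
  linarith
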